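/- The residual map E is differentiable on (ℝ^d)^L ≅ ℝ^{dL}; writing its Fréchet derivative at x as an L×L block matrix of d×d blocks J_{ts}(x) = ∂e_t/∂x_s, one has J_{ts}(x) = 0 whenever s > t, and det DE(x) = ∏_{t=1}^L det(J_{tt}(x)) = ∏_{t=2}^L det(I_d − Σ_t(x)·A), the t = 1 diagonal block being I_d. -/

import Mathlib

/-! Causality makes `E` block lower triangular: `e_t` depends only on `x_1, …, x_t`, so
`J_{ts} = 0` for `s > t` and `det DE(x)` is the product of the diagonal blocks. On the diagonal,
`x_t` enters `μ_t` only as the query of the softmax, and `∂α_{ts}/∂x_t = α_{ts} (x_s - μ_t)ᵀ A`;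
as these derivatives sum to zero over `s`, `∂μ_t/∂x_t = Σ_t(x) A`,
whence `J_{tt} = I - Σ_t(x) A`. -/

/- Vector strict-causal attention context (0-indexed positions via `Fin L`):
   μ_t(x), covariance Σ_t(x), residual e_t(x) = x_t - μ_t(x), residual map E = vResidMap.
   The Fréchet derivative of E at x is viewed as an L×L block matrix of d×d blocks
   J_{ts}(x) with entries `fderiv ℝ E x (Pi.single s (Pi.single j 1)) t i`. -/

noncomputable section

open Matrix

def vMu (d L : ℕ) (A : Matrix (Fin d) (Fin d) ℝ) (x : Fin L → Fin d → ℝ) (t : Fin L) :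
    Fin d → ℝ :=
  ∑ s ∈ Finset.Iio t,
    (Real.exp (x t ⬝ᵥ (Aᵀ *ᵥ x s)) /
      ∑ r ∈ Finset.Iio t, Real.exp (x t ⬝ᵥ (Aᵀ *ᵥ x r))) • x s

def vSigma (d L : ℕ) (A : Matrix (Fin d) (Fin d) ℝ) (x : Fin L → Fin d → ℝ) (t : Fin L) :
    Matrix (Fin d) (Fin d) ℝ :=
  ∑ s ∈ Finset.Iio t,
    (Real.exp (x t ⬝ᵥ (Aᵀ *ᵥ x s)) /
      ∑ r ∈ Finset.Iio t, Real.exp (x t ⬝ᵥ (Aᵀ *ᵥ x r))) •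
      Matrix.vecMulVec (x s - vMu d L A x t) (x s - vMu d L A x t)

def vResidMap (d L : ℕ) (A : Matrix (Fin d) (Fin d) ℝ) (x : Fin L → Fin d → ℝ) :
    Fin L → Fin d → ℝ :=
  fun t => x t - vMu d L A x t

theorem LinearMap.det_eq_prod_det_diagonal_blocks {R ι κ : Type*} [CommRing R] [Fintype ι]
    [LinearOrder ι] [Fintype κ] [DecidableEq κ] (f : (ι → κ → R) →ₗ[R] (ι → κ → R))
    (hf : ∀ t s, t < s → ∀ i j, f (Pi.single s (Pi.single j 1)) t i = 0) :
    LinearMap.det f = ∏ t, (Matrix.of fun i j => f (Pi.single t (Pi.single j 1)) t i).det := by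
  let B := Pi.basis fun _ : ι => Pi.basisFun R κ
  have hM : ∀ p q, LinearMap.toMatrix B B f p q = f (Pi.single q.1 (Pi.single q.2 1)) p.1 p.2 := by
    rintro ⟨t, i⟩ ⟨s, j⟩
    simp [B, LinearMap.toMatrix_apply, Pi.basis_apply, Pi.basis_repr]
  have hBT : (LinearMap.toMatrix B B f)ᵀ.BlockTriangular Sigma.fst :=
    fun p q hqp => by rw [transpose_apply, hM]; exact hf _ _ hqp _ _
  rw [← LinearMap.det_toMatrix B, ← det_transpose, hBT.det_fintype]
  refine Finset.prod_congr rfl fun t _ => ?_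
  rw [← det_submatrix_equiv_self (Equiv.sigmaSubtype t).symm, ← det_transpose]
  congr 1
  ext i j
  simp [toSquareBlock_def, hM]

theorem fderiv_apply_single {𝕜 ι F : Type*} [NontriviallyNormedField 𝕜] [Fintype ι] [DecidableEq ι]
    {E : ι → Type*} [∀ i, NormedAddCommGroup (E i)] [∀ i, NormedSpace 𝕜 (E i)]
    [NormedAddCommGroup F] [NormedSpace 𝕜 F] {f : (∀ i, E i) → F} {x : ∀ i, E i}
    (hf : DifferentiableAt 𝕜 f x) (s : ι) (v : E s) :
    fderiv 𝕜 f x (Pi.single s v) = fderiv 𝕜 (fun y => f (Function.update x s y)) (x s) v := by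
  rw [← Function.update_eq_self s x] at hf
  have h : HasFDerivAt (fun y => f (Function.update x s y)) _ (x s) :=
    hf.hasFDerivAt.comp (x s) (hasFDerivAt_update x (x s))
  rw [h.fderiv, Function.update_eq_self, ContinuousLinearMap.comp_apply]
  congr 1
  funext i
  rcases eq_or_ne i s with rfl | hi <;> simp [*]

section Softmax

open Real

def softmax {ι : Type*} (S : Finset ι) (a : ι → ℝ) (s : ι) : ℝ :=
  exp (a s) / ∑ r ∈ S, exp (a r)

variable {ι E : Type*} [NormedAddCommGroup E] [NormedSpace ℝ E] {S : Finset ι}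

theorem sum_exp_pos (hS : S.Nonempty) (a : ι → ℝ) : 0 < ∑ r ∈ S, exp (a r) :=
  Finset.sum_pos (fun _ _ => exp_pos _) hS

theorem sum_softmax (hS : S.Nonempty) (a : ι → ℝ) : ∑ s ∈ S, softmax S a s = 1 := by
  simp only [softmax, ← Finset.sum_div]
  exact div_self (sum_exp_pos hS a).ne'

theorem hasFDerivAt_softmax {a : E → ι → ℝ} {a' : ι → E →L[ℝ] ℝ} {y : E} (hS : S.Nonempty)
    (ha : ∀ r, HasFDerivAt (fun z => a z r) (a' r) y) (s : ι) :
    HasFDerivAt (fun z => softmax S (a z) s)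
      (softmax S (a y) s • (a' s - ∑ r ∈ S, softmax S (a y) r • a' r)) y := by
  have hZ := (sum_exp_pos hS (a y)).ne'
  have hsum : HasFDerivAt (fun z => ∑ r ∈ S, exp (a z r)) (∑ r ∈ S, exp (a y r) • a' r) y :=
    HasFDerivAt.fun_sum fun r _ => (ha r).exp
  refine HasFDerivAt.congr_fderiv (f := fun z => softmax S (a z) s)
    ((ha s).exp.mul ((hasDerivAt_inv hZ).comp_hasFDerivAt y hsum)) ?_
  ext v
  simp only [softmax, _root_.smul_apply, _root_.sub_apply, _root_.add_apply, FunLike.coe_sum,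
    Finset.sum_apply, smul_eq_mul, div_mul_eq_mul_div, ← Finset.sum_div]
  field_simp
  ring

end Softmax

theorem sum_centered_smul_sub {ι R M : Type*} [CommRing R] [AddCommGroup M] [Module R M]
    {S : Finset ι} {w : ι → R} (hw : ∑ s ∈ S, w s = 1) (c : ι → R) (x : ι → M) (m : M) :
    ∑ s ∈ S, (w s * (c s - ∑ r ∈ S, w r * c r)) • (x s - m)
      = ∑ s ∈ S, (w s * (c s - ∑ r ∈ S, w r * c r)) • x s := by
  have hzero : ∑ s ∈ S, w s * (c s - ∑ r ∈ S, w r * c r) = 0 := by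
    simp only [mul_sub, Finset.sum_sub_distrib, ← Finset.sum_mul, hw, one_mul, sub_self]
  simp only [smul_sub, Finset.sum_sub_distrib, ← Finset.sum_smul, hzero, zero_smul, sub_zero]

section Attention

variable {d L : ℕ} {A : Matrix (Fin d) (Fin d) ℝ}

open Finset Function

theorem vMu_congr {x x' : Fin L → Fin d → ℝ} {t : Fin L} (h : ∀ r ≤ t, x r = x' r) :
    vMu d L A x t = vMu d L A x' t := by
  have h' : ∀ r ∈ Iio t, x r = x' r := fun r hr => h r (mem_Iio.1 hr).le
  simp +contextual only [vMu, h t le_rfl, h']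

theorem vResidMap_update_of_lt (x : Fin L → Fin d → ℝ) {t s : Fin L} (hts : t < s)
    (y : Fin d → ℝ) : vResidMap d L A (update x s y) t = vResidMap d L A x t := by
  have h : ∀ r ≤ t, update x s y r = x r := fun r hr => update_of_ne (hr.trans_lt hts).ne _ _
  simp only [vResidMap, h t le_rfl, vMu_congr h]

theorem vResidMap_update_self (x : Fin L → Fin d → ℝ) (t : Fin L) (y : Fin d → ℝ) :
    vResidMap d L A (update x t y) t
      = y - ∑ s ∈ Iio t, softmax (Iio t) (fun r => y ⬝ᵥ (Aᵀ *ᵥ x r)) s • x s := by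
  have h : ∀ r ∈ Iio t, update x t y r = x r := fun r hr => update_of_ne (mem_Iio.1 hr).ne _ _
  simp +contextual only [vResidMap, vMu, softmax, update_self, h]

theorem vSigma_mul_mulVec (x : Fin L → Fin d → ℝ) (t : Fin L) (v : Fin d → ℝ) :
    (vSigma d L A x t * A) *ᵥ v = ∑ s ∈ Iio t,
      (softmax (Iio t) (fun r => x t ⬝ᵥ (Aᵀ *ᵥ x r)) s *
        ((x s - vMu d L A x t) ⬝ᵥ (A *ᵥ v))) • (x s - vMu d L A x t) := by
  simp only [vSigma, ← mulVec_mulVec, sum_mulVec, smul_mulVec, vecMulVec_mulVec, op_smul_eq_smul,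
    smul_smul, softmax]

theorem differentiable_attentionScore (t s : Fin L) :
    Differentiable ℝ fun x : Fin L → Fin d → ℝ => x t ⬝ᵥ (Aᵀ *ᵥ x s) := by
  simp only [dotProduct, mulVec]
  fun_prop

theorem differentiable_vResidMap : Differentiable ℝ (vResidMap d L A) := by
  refine differentiable_pi.2 fun t => (differentiable_apply t).sub
    (Differentiable.fun_sum fun s hs x => ?_)
  exact (hasFDerivAt_softmax ⟨s, hs⟩ (fun r => (differentiable_attentionScore t r x).hasFDerivAt)
    s).differentiableAt.smul (differentiable_apply s x)

theorem fderiv_vResidMap_single_apply (x : Fin L → Fin d → ℝ) (t s : Fin L) (v : Fin d → ℝ) :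
    fderiv ℝ (vResidMap d L A) x (Pi.single s v) t
      = fderiv ℝ (fun y => vResidMap d L A (update x s y) t) (x s) v := by
  rw [← fderiv_apply_single (differentiable_pi.1 differentiable_vResidMap t x),
    fderiv_apply (differentiable_vResidMap x)]
  rfl

theorem hasFDerivAt_vResidMap_update_self (x : Fin L → Fin d → ℝ) (t : Fin L) :
    HasFDerivAt (fun y => vResidMap d L A (update x t y) t)
      (toLin' (1 - vSigma d L A x t * A)).toContinuousLinearMap (x t) := by
  have hscore : ∀ r, HasFDerivAt (fun y : Fin d → ℝ => y ⬝ᵥ (Aᵀ *ᵥ x r))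
      ((dotProductBilin ℝ ℝ).flip (Aᵀ *ᵥ x r)).toContinuousLinearMap (x t) := fun r =>
    ((dotProductBilin ℝ ℝ).flip (Aᵀ *ᵥ x r)).toContinuousLinearMap.hasFDerivAt
  simp only [vResidMap_update_self]
  refine ((hasFDerivAt_id _).sub (HasFDerivAt.fun_sum fun s hs =>
    (hasFDerivAt_softmax ⟨s, hs⟩ hscore s).smul_const (x s))).congr_fderiv ?_
  ext1 v
  obtain hempty | hne := (Iio t).eq_empty_or_nonempty
  · simp [hempty, vSigma]
  simp only [_root_.sub_apply, ContinuousLinearMap.id_apply, LinearMap.coe_toContinuousLinearMap',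
    toLin'_apply, sub_mulVec, one_mulVec, vSigma_mul_mulVec, sub_dotProduct, FunLike.coe_sum,
    Finset.sum_apply, ContinuousLinearMap.smulRight_apply, _root_.smul_apply,
    LinearMap.flip_apply, dotProductBilin_apply_apply, smul_eq_mul]
  have hc : ∀ r, v ⬝ᵥ (Aᵀ *ᵥ x r) = x r ⬝ᵥ (A *ᵥ v) := fun r => by
    rw [dotProduct_comm, mulVec_transpose, dotProduct_mulVec]
  have hμ : vMu d L A x t ⬝ᵥ (A *ᵥ v) = ∑ r ∈ Iio t,
      softmax (Iio t) (fun r => x t ⬝ᵥ (Aᵀ *ᵥ x r)) r * (x r ⬝ᵥ (A *ᵥ v)) := by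
    simp only [vMu, sum_dotProduct, smul_dotProduct, smul_eq_mul, softmax]
  rw [hμ, sum_centered_smul_sub (sum_softmax hne _)]
  simp only [hc]

theorem fderiv_vResidMap_single_apply_of_lt (x : Fin L → Fin d → ℝ) {t s : Fin L} (hts : t < s)
    (v : Fin d → ℝ) : fderiv ℝ (vResidMap d L A) x (Pi.single s v) t = 0 := by
  simp only [fderiv_vResidMap_single_apply, vResidMap_update_of_lt x hts, fderiv_fun_const,
    Pi.zero_apply, _root_.zero_apply]

theorem vResidMap_diagonal_block (x : Fin L → Fin d → ℝ) (t : Fin L) :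
    (of fun i j => fderiv ℝ (vResidMap d L A) x (Pi.single t (Pi.single j 1)) t i)
      = 1 - vSigma d L A x t * A := by
  ext i j
  rw [of_apply, fderiv_vResidMap_single_apply, (hasFDerivAt_vResidMap_update_self x t).fderiv]
  simp only [LinearMap.coe_toContinuousLinearMap', toLin'_apply, mulVec_single_one, col_apply]

theorem vSigma_eq_zero (x : Fin L → Fin d → ℝ) {t : Fin L} (ht : (t : ℕ) = 0) :
    vSigma d L A x t = 0 := by
  have hempty : Iio t = ∅ := eq_empty_of_forall_notMem fun r hr => by
    have := Fin.lt_def.1 (mem_Iio.1 hr)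
    omega
  simp [vSigma, hempty]

theorem det_fderiv_vResidMap (x : Fin L → Fin d → ℝ) :
    (fderiv ℝ (vResidMap d L A) x).det = ∏ t, (of fun i j =>
      fderiv ℝ (vResidMap d L A) x (Pi.single t (Pi.single j 1)) t i).det :=
  LinearMap.det_eq_prod_det_diagonal_blocks _ fun _ _ hts _ j =>
    congrFun (fderiv_vResidMap_single_apply_of_lt x hts (Pi.single j 1)) _

end Attention

theorem stmt2_general (d L : ℕ) (A : Matrix (Fin d) (Fin d) ℝ) :
    Differentiable ℝ (vResidMap d L A) ∧
    ∀ x : Fin L → Fin d → ℝ,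
      (∀ t s : Fin L, t < s → ∀ i j : Fin d,
        fderiv ℝ (vResidMap d L A) x (Pi.single s (Pi.single j 1)) t i = 0) ∧
      (∀ t : Fin L, (t : ℕ) = 0 →
        (Matrix.of fun i j : Fin d =>
          fderiv ℝ (vResidMap d L A) x (Pi.single t (Pi.single j 1)) t i) =
          (1 : Matrix (Fin d) (Fin d) ℝ)) ∧
      ((fderiv ℝ (vResidMap d L A) x).det =
        ∏ t : Fin L, (Matrix.of fun i j : Fin d =>
          fderiv ℝ (vResidMap d L A) x (Pi.single t (Pi.single j 1)) t i).det) ∧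
      (fderiv ℝ (vResidMap d L A) x).det =
        ∏ t ∈ Finset.univ.filter (fun t : Fin L => 1 ≤ (t : ℕ)),
          ((1 : Matrix (Fin d) (Fin d) ℝ) - vSigma d L A x t * A).det := by
  refine ⟨differentiable_vResidMap, fun x => ⟨fun t s hts i j => ?_, fun t ht => ?_,
    det_fderiv_vResidMap x, ?_⟩⟩
  · rw [fderiv_vResidMap_single_apply_of_lt x hts, Pi.zero_apply]
  · rw [vResidMap_diagonal_block, vSigma_eq_zero x ht, zero_mul, sub_zero]
  · simp only [det_fderiv_vResidMap, vResidMap_diagonal_block]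
    refine (Finset.prod_filter_of_ne fun t _ hdet => ?_).symm
    by_contra! ht
    rw [vSigma_eq_zero x (by omega), zero_mul, sub_zero, det_one] at hdet
    exact hdet rfl

/-- The residual map `E` is differentiable; its block Jacobian satisfies `J_{ts}(x) = 0`
for `s > t`, the first diagonal block (t = 1, i.e. index 0) is `I_d`, and
`det DE(x) = ∏_t det(J_{tt}(x)) = ∏_{t=2}^L det(I_d − Σ_t(x)·A)`. -/
theorem stmt2 (d L : ℕ) (hd : 1 ≤ d) (hL : 1 ≤ L) (A : Matrix (Fin d) (Fin d) ℝ) :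
    Differentiable ℝ (vResidMap d L A) ∧
    ∀ x : Fin L → Fin d → ℝ,
      (∀ t s : Fin L, t < s → ∀ i j : Fin d,
        fderiv ℝ (vResidMap d L A) x (Pi.single s (Pi.single j 1)) t i = 0) ∧
      (∀ t : Fin L, (t : ℕ) = 0 →
        (Matrix.of fun i j : Fin d =>
          fderiv ℝ (vResidMap d L A) x (Pi.single t (Pi.single j 1)) t i) =
          (1 : Matrix (Fin d) (Fin d) ℝ)) ∧
      ((fderiv ℝ (vResidMap d L A) x).det =
        ∏ t : Fin L, (Matrix.of fun i j : Fin d =>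
          fderiv ℝ (vResidMap d L A) x (Pi.single t (Pi.single j 1)) t i).det) ∧
      (fderiv ℝ (vResidMap d L A) x).det =
        ∏ t ∈ Finset.univ.filter (fun t : Fin L => 1 ≤ (t : ℕ)),
          ((1 : Matrix (Fin d) (Fin d) ℝ) - vSigma d L A x t * A).det :=
  stmt2_general d L A

end
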